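/- Let η > 0, ρ ≥ ρ̲ > 0 with η ≤ η̄, and let c > 0. Then the truncated second moment of the centered symmetric doubly truncated normal distribution satisfies ∫_{{y : |y| ≥ c}} y² · f_{0,η,ρ}(y) dy ≤ η̄² · (1/(2Φ(ρ̲)-1)) · √(2/π) · ∫_{c/η̄}^∞ u² exp(-u²/2) du. -/

import Mathlib

open MeasureTheory Real Set Filter

/-- The standard normal density `φ(x) = (2π)^(-1/2) exp(-x²/2)`. -/
noncomputable def stdNormalPDF (x : ℝ) : ℝ :=
  (Real.sqrt (2 * Real.pi))⁻¹ * Real.exp (-x ^ 2 / 2)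

/-- The standard normal CDF `Φ(x) = ∫_{-∞}^x φ(t) dt`. -/
noncomputable def stdNormalCDF (x : ℝ) : ℝ :=
  ∫ t in Set.Iic x, stdNormalPDF t

/-- The symmetric doubly truncated normal (SDTN) density with location `μ`, scale `η`
and truncation parameter `ρ`. -/
noncomputable def sdtnPDF (μ η ρ : ℝ) (x : ℝ) : ℝ :=
  if x ∈ Set.Icc (μ - ρ * η) (μ + ρ * η) then
    stdNormalPDF ((x - μ) / η) / (η * (2 * stdNormalCDF ρ - 1))
  else 0

/-! Since `Φ` is increasing, `K = 2Φ(ρ̲) - 1 ≤ 2Φ(ρ) - 1`, so on `{|y| ≥ c}` the integrand is at most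
`y² φ(y/η) / (η K)`, the untruncated Gaussian moment. That bound is even in `y`, and the substitution
`y = η u` turns its integral into `2 η² / K · ∫_{c/η}^∞ u² φ(u) du`, which only grows when `η` is
replaced by `η̄ ≥ η`. Finally `2 φ(u) = √(2/π) exp(-u²/2)`. -/

lemma stdNormalPDF_eq_gaussianPDFReal : stdNormalPDF = ProbabilityTheory.gaussianPDFReal 0 1 := by
  ext x
  simp [stdNormalPDF, ProbabilityTheory.gaussianPDFReal]

lemma stdNormalPDF_pos (x : ℝ) : 0 < stdNormalPDF x := by
  rw [stdNormalPDF_eq_gaussianPDFReal]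
  exact ProbabilityTheory.gaussianPDFReal_pos 0 1 x one_ne_zero

lemma stdNormalPDF_neg (x : ℝ) : stdNormalPDF (-x) = stdNormalPDF x := by
  simp [stdNormalPDF]

lemma integrable_stdNormalPDF : Integrable stdNormalPDF :=
  stdNormalPDF_eq_gaussianPDFReal ▸ ProbabilityTheory.integrable_gaussianPDFReal 0 1

lemma integral_stdNormalPDF : ∫ x, stdNormalPDF x = 1 :=
  stdNormalPDF_eq_gaussianPDFReal ▸ ProbabilityTheory.integral_gaussianPDFReal_eq_one 0 one_ne_zero

lemma sqrt_two_div_pi_mul_exp (x : ℝ) :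
    √(2 / π) * exp (-x ^ 2 / 2) = 2 * stdNormalPDF x := by
  rw [stdNormalPDF, Real.sqrt_div' _ pi_pos.le, Real.sqrt_mul zero_le_two]
  field_simp
  exact Real.sq_sqrt zero_le_two

lemma sqrt_two_div_pi_mul_integral_Ici_sq_mul_exp (t : ℝ) :
    √(2 / π) * ∫ u in Ici t, u ^ 2 * exp (-u ^ 2 / 2) =
      2 * ∫ u in Ioi t, u ^ 2 * stdNormalPDF u := by
  rw [integral_Ici_eq_integral_Ioi, ← integral_const_mul, ← integral_const_mul]
  congr 1 with u
  linear_combination u ^ 2 * sqrt_two_div_pi_mul_exp u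

lemma integrable_sq_mul_stdNormalPDF : Integrable fun u : ℝ ↦ u ^ 2 * stdNormalPDF u := by
  have h := (integrable_rpow_mul_exp_neg_mul_sq (by norm_num : (0 : ℝ) < 1 / 2)
    (by norm_num : (-1 : ℝ) < 2)).const_mul (√(2 * π))⁻¹
  refine h.congr (ae_of_all _ fun u ↦ ?_)
  simp only [stdNormalPDF, Real.rpow_two]
  ring_nf

lemma stdNormalCDF_zero : stdNormalCDF 0 = 1 / 2 := by
  have hsymm : stdNormalCDF 0 = ∫ t in Ioi 0, stdNormalPDF t := by
    simpa [stdNormalCDF, stdNormalPDF_neg] using integral_comp_neg_Iic 0 stdNormalPDF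
  have htotal : stdNormalCDF 0 + ∫ t in Ioi 0, stdNormalPDF t = 1 := by
    rw [stdNormalCDF, intervalIntegral.integral_Iic_add_Ioi integrable_stdNormalPDF.integrableOn
      integrable_stdNormalPDF.integrableOn, integral_stdNormalPDF]
  linarith

lemma stdNormalCDF_strictMono : StrictMono stdNormalCDF := by
  intro a b hab
  have hsplit : stdNormalCDF b = stdNormalCDF a + ∫ t in Ioc a b, stdNormalPDF t := by
    rw [stdNormalCDF, stdNormalCDF, ← setIntegral_union (Iic_disjoint_Ioc le_rfl) measurableSet_Ioc
      integrable_stdNormalPDF.integrableOn integrable_stdNormalPDF.integrableOn,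
      Iic_union_Ioc_eq_Iic hab.le]
  have hpos : 0 < ∫ t in Ioc a b, stdNormalPDF t := by
    rw [← intervalIntegral.integral_of_le hab.le]
    exact intervalIntegral.intervalIntegral_pos_of_pos_on
      integrable_stdNormalPDF.intervalIntegrable (fun x _ ↦ stdNormalPDF_pos x) hab
  linarith

lemma one_lt_two_mul_stdNormalCDF {a : ℝ} (ha : 0 < a) : 1 < 2 * stdNormalCDF a := by
  linarith [stdNormalCDF_strictMono ha, stdNormalCDF_zero]

lemma sdtnPDF_nonneg {μ η ρ : ℝ} (hη : 0 ≤ η) (hρ : 0 ≤ ρ) (x : ℝ) : 0 ≤ sdtnPDF μ η ρ x := by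
  have hΦ : 1 ≤ 2 * stdNormalCDF ρ := by
    linarith [stdNormalCDF_strictMono.monotone hρ, stdNormalCDF_zero]
  unfold sdtnPDF
  split_ifs
  · exact div_nonneg (stdNormalPDF_pos _).le (mul_nonneg hη (by linarith))
  · exact le_rfl

lemma sdtnPDF_le {μ η ρ K : ℝ} (hη : 0 < η) (hK : 0 < K) (hKρ : K ≤ 2 * stdNormalCDF ρ - 1)
    (x : ℝ) : sdtnPDF μ η ρ x ≤ stdNormalPDF ((x - μ) / η) / η / K := by
  have hbound : 0 ≤ stdNormalPDF ((x - μ) / η) / η / K := by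
    have := stdNormalPDF_pos ((x - μ) / η)
    positivity
  unfold sdtnPDF
  split_ifs
  · rw [div_div]
    gcongr
    exact (stdNormalPDF_pos _).le
  · exact hbound

lemma integrable_sq_mul_stdNormalPDF_div {η : ℝ} (hη : η ≠ 0) :
    Integrable fun y : ℝ ↦ y ^ 2 * stdNormalPDF (y / η) / η := by
  refine ((integrable_sq_mul_stdNormalPDF.comp_div hη).const_mul η).congr
    (ae_of_all _ fun y ↦ ?_)
  simp only
  field_simp

lemma integral_Ioi_sq_mul_stdNormalPDF_div {η : ℝ} (hη : 0 < η) (c : ℝ) :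
    ∫ y in Ioi c, y ^ 2 * stdNormalPDF (y / η) / η =
      η ^ 2 * ∫ u in Ioi (c / η), u ^ 2 * stdNormalPDF u := by
  have hscale := integral_comp_mul_left_Ioi (fun u ↦ u ^ 2 * stdNormalPDF u) c (inv_pos.mpr hη)
  rw [inv_inv, smul_eq_mul, inv_mul_eq_div] at hscale
  rw [sq, mul_assoc, ← hscale, ← integral_const_mul]
  refine setIntegral_congr_fun measurableSet_Ioi fun y _ ↦ ?_
  simp only [inv_mul_eq_div]
  field_simp

lemma integral_Ioi_sq_mul_stdNormalPDF_antitone :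
    Antitone fun t : ℝ ↦ ∫ u in Ioi t, u ^ 2 * stdNormalPDF u :=
  fun _ _ hst ↦ setIntegral_mono_set integrable_sq_mul_stdNormalPDF.integrableOn
    (ae_of_all _ fun u ↦ mul_nonneg (sq_nonneg u) (stdNormalPDF_pos u).le)
    (Ioi_subset_Ioi hst).eventuallyLE

lemma setIntegral_abs_ge_eq_two_mul_of_even {f : ℝ → ℝ} (hf : ∀ y, f (-y) = f y)
    (hfi : Integrable f) {c : ℝ} (hc : 0 < c) :
    ∫ y in {y : ℝ | c ≤ |y|}, f y = 2 * ∫ y in Ioi c, f y := by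
  have hset : {y : ℝ | c ≤ |y|} = Iic (-c) ∪ Ici c := by
    ext y
    simp only [mem_ofPred_eq, mem_union, mem_Iic, mem_Ici, le_abs, le_neg]
    tauto
  have hleft : ∫ y in Iic (-c), f y = ∫ y in Ioi c, f y := by
    rw [← integral_comp_neg_Ioi]
    simp only [hf]
  rw [hset, setIntegral_union (Iic_disjoint_Ici.mpr (by linarith)) measurableSet_Ici
    hfi.integrableOn hfi.integrableOn, hleft, integral_Ici_eq_integral_Ioi, two_mul]

theorem sdtn_truncated_second_moment_bound (η ρ ρl ηb c : ℝ)
    (hη : 0 < η) (hρl : 0 < ρl) (hρ : ρl ≤ ρ) (hηb : η ≤ ηb) (hc : 0 < c) :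
    (∫ y in {y : ℝ | c ≤ |y|}, y ^ 2 * sdtnPDF 0 η ρ y) ≤
      ηb ^ 2 * (1 / (2 * stdNormalCDF ρl - 1)) * Real.sqrt (2 / Real.pi) *
        ∫ u in Set.Ici (c / ηb), u ^ 2 * Real.exp (-u ^ 2 / 2) := by
  set K := 2 * stdNormalCDF ρl - 1
  have hK : 0 < K := by linarith [one_lt_two_mul_stdNormalCDF hρl]
  have hKρ : K ≤ 2 * stdNormalCDF ρ - 1 := by linarith [stdNormalCDF_strictMono.monotone hρ]
  have hmoment_even : ∀ y : ℝ, (-y) ^ 2 * stdNormalPDF (-y / η) / η / K =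
      y ^ 2 * stdNormalPDF (y / η) / η / K := fun y ↦ by
    rw [neg_div, stdNormalPDF_neg, neg_sq]
  calc (∫ y in {y : ℝ | c ≤ |y|}, y ^ 2 * sdtnPDF 0 η ρ y)
      ≤ ∫ y in {y : ℝ | c ≤ |y|}, y ^ 2 * stdNormalPDF (y / η) / η / K := by
        refine setIntegral_mono_of_nonneg
          (fun y _ ↦ mul_nonneg (sq_nonneg y) (sdtnPDF_nonneg hη.le (hρl.le.trans hρ) y))
          (fun y _ ↦ ?_) ((integrable_sq_mul_stdNormalPDF_div hη.ne').div_const K).integrableOn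
        simpa only [sub_zero, mul_div_assoc] using
          mul_le_mul_of_nonneg_left (sdtnPDF_le (μ := 0) hη hK hKρ y) (sq_nonneg y)
    _ = 2 / K * η ^ 2 * ∫ u in Ioi (c / η), u ^ 2 * stdNormalPDF u := by
        rw [setIntegral_abs_ge_eq_two_mul_of_even hmoment_even
          ((integrable_sq_mul_stdNormalPDF_div hη.ne').div_const K) hc, integral_div,
          integral_Ioi_sq_mul_stdNormalPDF_div hη]
        ring
    _ ≤ 2 / K * ηb ^ 2 * ∫ u in Ioi (c / ηb), u ^ 2 * stdNormalPDF u := by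
        have hηb₀ : 0 < ηb := hη.trans_le hηb
        exact mul_le_mul (by gcongr) (integral_Ioi_sq_mul_stdNormalPDF_antitone (by gcongr))
          (integral_nonneg fun u ↦ mul_nonneg (sq_nonneg u) (stdNormalPDF_pos u).le)
          (by positivity)
    _ = _ := by
        rw [mul_assoc _ √(2 / π), sqrt_two_div_pi_mul_integral_Ici_sq_mul_exp]
        ring
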